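/- Let C be a category with products indexed by A*, let A be an alphabet and L : O_A → C a C-language. Define the C-automaton 𝒜_fin by: 𝒜_fin(center) = the product of copies of L(right) indexed by words u ∈ A*; 𝒜_fin(◁) : 𝒜_fin(center) → L(right) is the projection at the empty word ε; 𝒜_fin(a) : 𝒜_fin(center) → 𝒜_fin(center) is the morphism whose u-indexed component is the projection at au; and 𝒜_fin(▷) : L(left) → 𝒜_fin(center) is the morphism whose u-indexed component is L(▷u◁). Then 𝒜_fin accepts L and is a final object of Auto(L). -/

import Mathlib

open CategoryTheory CategoryTheory.Limits

universe v u

/-! ### The input category `I_A` of word automata -/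

inductive WObj (A : Type) : Type where
  | left | center | right

inductive WEdge {A : Type} : WObj A → WObj A → Type where
  | tri : WEdge WObj.left WObj.center
  | letter (a : A) : WEdge WObj.center WObj.center
  | tril : WEdge WObj.center WObj.right

instance (A : Type) : Quiver (WObj A) := ⟨WEdge⟩

/-- `I_A`: the free category on the graph `left -▷→ center -a→ center -◁→ right`. -/
def IA (A : Type) : Type := Paths (WObj A)

instance (A : Type) : Category (IA A) :=
  inferInstanceAs (Category (Paths (WObj A)))

def IA.l (A : Type) : IA A := WObj.left
def IA.c (A : Type) : IA A := WObj.center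
def IA.r (A : Type) : IA A := WObj.right

/-- The generating morphism `▷ : left ⟶ center`. -/
def IA.tri (A : Type) : IA.l A ⟶ IA.c A := Quiver.Hom.toPath WEdge.tri
/-- The generating morphism `a : center ⟶ center` for a letter `a`. -/
def IA.letter {A : Type} (a : A) : IA.c A ⟶ IA.c A := Quiver.Hom.toPath (WEdge.letter a)
/-- The generating morphism `◁ : center ⟶ right`. -/
def IA.tril (A : Type) : IA.c A ⟶ IA.r A := Quiver.Hom.toPath WEdge.tril

/-- The word spelled by a path in the graph (the sequence of `letter` edges used). -/
def toWord {A : Type} : ∀ {X Y : WObj A}, Quiver.Path X Y → List A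
  | _, _, Quiver.Path.nil => []
  | _, _, Quiver.Path.cons p e =>
      toWord p ++ (match e with
        | WEdge.letter a => [a]
        | _ => [])

/-- The path `center → center` spelling a word `w`. -/
def pathCC {A : Type} : List A → ((IA.c A) ⟶ (IA.c A))
  | [] => Quiver.Path.nil
  | a :: w => (Quiver.Hom.toPath (WEdge.letter a)).comp (pathCC w)

/-- The path `▷ w ◁ : left ⟶ right` spelling a word `w`. -/
def pathLR {A : Type} (w : List A) : (IA.l A) ⟶ (IA.r A) :=
  IA.tri A ≫ pathCC w ≫ IA.tril A

theorem path_from_right {A : Type} : ∀ {Z : WObj A},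
    Quiver.Path (WObj.right : WObj A) Z → Z = WObj.right
  | _, Quiver.Path.nil => rfl
  | _, Quiver.Path.cons p e => by
      have h := path_from_right p
      subst h
      exact nomatch e

theorem path_ll_nil {A : Type} (p : Quiver.Path (WObj.left : WObj A) WObj.left) :
    p = Quiver.Path.nil := by
  cases p with
  | nil => rfl
  | cons q e => exact nomatch e

theorem path_rr_nil {A : Type} (p : Quiver.Path (WObj.right : WObj A) WObj.right) :
    p = Quiver.Path.nil := by
  cases p with
  | nil => rfl
  | cons q e =>
      have h := path_from_right q
      subst h
      exact nomatch e

theorem path_rl_false {A : Type} (p : Quiver.Path (WObj.right : WObj A) WObj.left) :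
    False := by
  have := path_from_right p
  exact nomatch this

/-- `O_A`: the full subcategory of `I_A` on the objects `left` and `right`. -/
def OA (A : Type) : Type := ObjectProperty.FullSubcategory (fun X : IA A => X ≠ IA.c A)

instance (A : Type) : Category (OA A) :=
  inferInstanceAs (Category (ObjectProperty.FullSubcategory (fun X : IA A => X ≠ IA.c A)))

/-- The inclusion functor `ι : O_A ⥤ I_A`. -/
def OA.inc (A : Type) : OA A ⥤ IA A := ObjectProperty.ι _

def OA.l (A : Type) : OA A := ⟨IA.l A, fun h => nomatch h⟩
def OA.r (A : Type) : OA A := ⟨IA.r A, fun h => nomatch h⟩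

/-- The morphism `▷ w ◁ : left ⟶ right` of `O_A`. -/
def OA.word {A : Type} (w : List A) : OA.l A ⟶ OA.r A := ObjectProperty.homMk (pathLR w)

/-- The language `O_A ⥤ C` determined by two objects `LI`, `LO` of `C` and a function
assigning to every word `w ∈ A*` a morphism `LI ⟶ LO` (the value at `▷w◁`). -/
def mkLang {A : Type} {C : Type u} [Category.{v} C] (LI LO : C)
    (f : List A → (LI ⟶ LO)) : OA A ⥤ C where
  obj X :=
    match X with
    | ⟨WObj.left, _⟩ => LI
    | ⟨WObj.right, _⟩ => LO
    | ⟨WObj.center, h⟩ => absurd rfl h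
  map {X Y} p :=
    match X, Y, p with
    | ⟨WObj.left, _⟩, ⟨WObj.left, _⟩, _ => 𝟙 LI
    | ⟨WObj.left, _⟩, ⟨WObj.right, _⟩, p => f (toWord p.hom)
    | ⟨WObj.right, _⟩, ⟨WObj.right, _⟩, _ => 𝟙 LO
    | ⟨WObj.right, _⟩, ⟨WObj.left, _⟩, p => (path_rl_false p.hom).elim
    | ⟨WObj.center, h⟩, _, _ => absurd rfl h
    | _, ⟨WObj.center, h⟩, _ => absurd rfl h
  map_id X := by
    rcases X with ⟨(_|_|_), hX⟩
    · rfl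
    · exact absurd rfl hX
    · rfl
  map_comp {X Y Z} p q := by
    rcases X with ⟨(_|_|_), hX⟩ <;> rcases Y with ⟨(_|_|_), hY⟩ <;>
      rcases Z with ⟨(_|_|_), hZ⟩ <;>
      first
        | exact absurd rfl hX
        | exact absurd rfl hY
        | exact absurd rfl hZ
        | exact (path_rl_false p.hom).elim
        | exact (path_rl_false q.hom).elim
        | exact (Category.id_comp _).symm
        | (show f (toWord (Quiver.Path.comp p.hom q.hom)) = 𝟙 LI ≫ f (toWord q.hom)
           rw [path_ll_nil p.hom]
           exact (congrArg (fun w => f (toWord w)) (Quiver.Path.nil_comp q.hom)).trans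
             (Category.id_comp _).symm)
        | (show f (toWord (Quiver.Path.comp p.hom q.hom)) = f (toWord p.hom) ≫ 𝟙 LO
           rw [path_rr_nil q.hom]
           exact (Category.comp_id _).symm)

/-- A `C`-automaton `M` accepts the `C`-language `L` when `ι ⋙ M = L`. -/
def Accepts {A : Type} {C : Type u} [Category.{v} C] (M : IA A ⥤ C) (L : OA A ⥤ C) : Prop :=
  OA.inc A ⋙ M = L

/-- The category `Auto(L)` of `C`-automata accepting the language `L`; morphisms are
natural transformations whose whiskering along `ι` is the identity of `L`. -/
def Auto (A : Type) {C : Type u} [Category.{v} C] (L : OA A ⥤ C) : Type _ :=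
  { M : IA A ⥤ C // Accepts M L }

instance (A : Type) {C : Type u} [Category.{v} C] (L : OA A ⥤ C) :
    Category (Auto A L) where
  Hom M N := { α : M.1 ⟶ N.1 //
    CategoryTheory.Functor.whiskerLeft (OA.inc A) α = eqToHom (M.2.trans N.2.symm) }
  id M := ⟨𝟙 M.1, by simp⟩
  comp {M N P} f g := ⟨f.1 ≫ g.1, by
    rw [CategoryTheory.Functor.whiskerLeft_comp, f.2, g.2, eqToHom_trans]⟩
  id_comp f := Subtype.ext (Category.id_comp _)
  comp_id f := Subtype.ext (Category.comp_id _)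
  assoc f g h := Subtype.ext (Category.assoc _ _ _)

/-- The functor `St : Auto(L) ⥤ C` evaluating an automaton at the object `center`. -/
def St (A : Type) {C : Type u} [Category.{v} C] (L : OA A ⥤ C) : Auto A L ⥤ C where
  obj M := M.1.obj (IA.c A)
  map f := f.1.app (IA.c A)
  map_id _ := rfl
  map_comp _ _ := rfl

/-- The underlying natural transformation of a morphism in `Auto(L)`. -/
def Auto.nat {A : Type} {C : Type u} [Category.{v} C] {L : OA A ⥤ C} {M N : Auto A L}
    (α : M ⟶ N) : M.1 ⟶ N.1 :=
  (show { β : M.1 ⟶ N.1 //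
      CategoryTheory.Functor.whiskerLeft (OA.inc A) β = eqToHom (M.2.trans N.2.symm) } from α).1

/-- Constructor for objects of `Auto(L)`. -/
def Auto.mk {A : Type} {C : Type u} [Category.{v} C] {L : OA A ⥤ C}
    (M : IA A ⥤ C) (h : Accepts M L) : Auto A L := ⟨M, h⟩

variable {A : Type} {C : Type u} [Category.{v} C]

/-- The final automaton for a language `L : O_A ⥤ C`, defined on the generating graph:
its state object is the `A*`-indexed power of `L(right)`, `◁` is the projection at the
empty word, a letter `a` acts with `u`-indexed component the projection at `a·u`, and `▷`
has `u`-indexed component `L(▷u◁)`. -/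
noncomputable def AfinPre [HasLimitsOfShape (Discrete (List A)) C] (L : OA A ⥤ C) :
    WObj A ⥤q C where
  obj X :=
    match X with
    | WObj.left => L.obj (OA.l A)
    | WObj.center => ∏ᶜ (fun _ : List A => L.obj (OA.r A))
    | WObj.right => L.obj (OA.r A)
  map e :=
    match e with
    | WEdge.tri => Pi.lift (fun u : List A => L.map (OA.word u))
    | WEdge.letter a =>
        Pi.lift (fun u : List A => Pi.π (fun _ : List A => L.obj (OA.r A)) (a :: u))
    | WEdge.tril => Pi.π (fun _ : List A => L.obj (OA.r A)) ([] : List A)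

/-- The automaton `𝒜_fin`, i.e. the above data regarded as a functor `I_A ⥤ C`. -/
noncomputable def Afin [HasLimitsOfShape (Discrete (List A)) C] (L : OA A ⥤ C) :
    IA A ⥤ C :=
  Paths.lift (AfinPre L)

/-! Every morphism `left ⟶ right` of `I_A` is `▷w◁` for the word `w` it spells, and
`𝒜_fin(▷w◁)` is the `w`-th coordinate of `𝒜_fin(▷)`, namely `L(▷w◁)`; so `𝒜_fin` accepts `L`.
For an automaton `M` accepting `L`, a morphism `M ⟶ 𝒜_fin` in `Auto(L)` is the identity at
`left` and `right`, so naturality along `u◁ : center ⟶ right` forces the `u`-th coordinate of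
its component at `center` to be `M(u◁)`. Conversely these components are natural, as it suffices
to check naturality on the generating edges. -/

theorem pathCC_append_singleton (w : List A) (a : A) :
    pathCC (w ++ [a]) = (pathCC w).cons (WEdge.letter a) := by
  induction w with
  | nil => rfl
  | cons b w ih => exact congrArg (Quiver.Path.comp _) ih

theorem eq_tri_comp_pathCC_toWord :
    ∀ p : Quiver.Path (WObj.left : WObj A) WObj.center, p = IA.tri A ≫ pathCC (toWord p)
  | .cons q WEdge.tri => by
      rw [path_ll_nil q]
      simp only [toWord, List.append_nil]
      rfl
  | .cons q (WEdge.letter a) => by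
      conv_lhs => rw [eq_tri_comp_pathCC_toWord q]
      simp only [toWord, pathCC_append_singleton]
      rfl

theorem eq_pathLR_toWord :
    ∀ p : Quiver.Path (WObj.left : WObj A) WObj.right, p = pathLR (toWord p)
  | .cons q WEdge.tril => by
      conv_lhs => rw [eq_tri_comp_pathCC_toWord q]
      simp only [toWord, List.append_nil]
      rfl

section Afin

variable [HasLimitsOfShape (Discrete (List A)) C] (L : OA A ⥤ C)

-- Typed with `Afin`'s own objects rather than those of `Pi.π`, so that composites rewrite.
noncomputable def Afin.proj (u : List A) : (Afin L).obj (IA.c A) ⟶ (Afin L).obj (IA.r A) :=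
  Pi.π (fun _ : List A => L.obj (OA.r A)) u

theorem Afin.hom_ext {X : C} {f g : X ⟶ (Afin L).obj (IA.c A)}
    (h : ∀ u, f ≫ Afin.proj L u = g ≫ Afin.proj L u) : f = g :=
  Pi.hom_ext _ _ h

theorem Afin_map_tri_proj (u : List A) :
    (Afin L).map (IA.tri A) ≫ Afin.proj L u = L.map (OA.word u) := by
  rw [show (Afin L).map (IA.tri A) = Pi.lift (fun u => L.map (OA.word u)) from
    Paths.lift_toPath _ _]
  exact Pi.lift_π _ _

theorem Afin_map_letter_proj (a : A) (u : List A) :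
    (Afin L).map (IA.letter a) ≫ Afin.proj L u = Afin.proj L (a :: u) := by
  rw [show (Afin L).map (IA.letter a) = Pi.lift (fun u => Afin.proj L (a :: u)) from
    Paths.lift_toPath _ _]
  exact Pi.lift_π _ _

theorem Afin_map_tril : (Afin L).map (IA.tril A) = Afin.proj L [] :=
  Paths.lift_toPath _ _

theorem Afin_map_pathCC_proj (u v : List A) :
    (Afin L).map (pathCC u) ≫ Afin.proj L v = Afin.proj L (u ++ v) := by
  induction u with
  | nil => exact Category.id_comp _
  | cons a u ih =>
      change (Afin L).map (IA.letter a ≫ pathCC u) ≫ _ = _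
      rw [Functor.map_comp, Category.assoc, ih, Afin_map_letter_proj, List.cons_append]

theorem Afin_map_pathCC_tril (u : List A) :
    (Afin L).map (pathCC u ≫ IA.tril A) = Afin.proj L u := by
  rw [Functor.map_comp, Afin_map_tril, Afin_map_pathCC_proj, List.append_nil]

theorem Afin_map_pathLR (w : List A) : (Afin L).map (pathLR w) = L.map (OA.word w) := by
  rw [pathLR, Functor.map_comp, Afin_map_pathCC_tril, Afin_map_tri_proj]

theorem Afin_accepts : Accepts (Afin L) L := by
  refine CategoryTheory.Functor.ext ?_ ?_
  · rintro ⟨_ | _ | _, hX⟩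
    · rfl
    · exact absurd rfl hX
    · rfl
  · rintro ⟨_ | _ | _, hX⟩ ⟨_ | _ | _, hY⟩ ⟨p⟩
    all_goals first | exact absurd rfl hX | exact absurd rfl hY | skip
    · obtain rfl := path_ll_nil p
      show (Afin L).map (𝟙 (IA.l A)) = 𝟙 _ ≫ L.map (𝟙 (OA.l A)) ≫ 𝟙 _
      simp only [L.map_id, Category.comp_id]
      rfl
    · show (Afin L).map p = 𝟙 _ ≫ L.map (ObjectProperty.homMk p : OA.l A ⟶ OA.r A) ≫ 𝟙 _
      rw [Category.id_comp, Category.comp_id, eq_pathLR_toWord p]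
      exact Afin_map_pathLR L _
    · exact (path_rl_false p).elim
    · obtain rfl := path_rr_nil p
      show (Afin L).map (𝟙 (IA.r A)) = 𝟙 _ ≫ L.map (𝟙 (OA.r A)) ≫ 𝟙 _
      simp only [L.map_id, Category.comp_id]
      rfl

end Afin

theorem app_eq_eqToHom_of_whiskerLeft {M N : IA A ⥤ C} {β : M ⟶ N}
    {h : OA.inc A ⋙ M = OA.inc A ⋙ N} (hβ : Functor.whiskerLeft (OA.inc A) β = eqToHom h)
    (X : OA A) : β.app X.obj = eqToHom (Functor.congr_obj h X) :=
  (congrArg (fun γ => NatTrans.app γ X) hβ).trans (eqToHom_app _ _)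

namespace Accepts

variable {L : OA A ⥤ C} {M : IA A ⥤ C}

theorem obj_l (hM : Accepts M L) : M.obj (IA.l A) = L.obj (OA.l A) :=
  Functor.congr_obj hM (OA.l A)

theorem obj_r (hM : Accepts M L) : M.obj (IA.r A) = L.obj (OA.r A) :=
  Functor.congr_obj hM (OA.r A)

theorem map_pathLR (hM : Accepts M L) (w : List A) :
    M.map (pathLR w) = eqToHom hM.obj_l ≫ L.map (OA.word w) ≫ eqToHom hM.obj_r.symm :=
  Functor.congr_hom hM (OA.word w)

theorem map_pathLR_comp_eqToHom {N : IA A ⥤ C} (hM : Accepts M L) (hN : Accepts N L)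
    (w : List A) :
    M.map (pathLR w) ≫ eqToHom (hM.obj_r.trans hN.obj_r.symm) =
      eqToHom (hM.obj_l.trans hN.obj_l.symm) ≫ N.map (pathLR w) := by
  simp [hM.map_pathLR, hN.map_pathLR]

section Final

variable [HasLimitsOfShape (Discrete (List A)) C] (hM : Accepts M L)

noncomputable def toAfinApp : ∀ X : IA A, M.obj X ⟶ (Afin L).obj X
  | WObj.left => eqToHom (hM.obj_l.trans (Afin_accepts L).obj_l.symm)
  | WObj.center => Pi.lift fun u =>
      M.map (pathCC u ≫ IA.tril A) ≫ eqToHom (hM.obj_r.trans (Afin_accepts L).obj_r.symm)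
  | WObj.right => eqToHom (hM.obj_r.trans (Afin_accepts L).obj_r.symm)

theorem toAfinApp_center_proj (u : List A) :
    toAfinApp hM (IA.c A) ≫ Afin.proj L u =
      M.map (pathCC u ≫ IA.tril A) ≫ toAfinApp hM (IA.r A) :=
  Pi.lift_π _ _

theorem toAfinApp_tri :
    M.map (IA.tri A) ≫ toAfinApp hM (IA.c A) =
      toAfinApp hM (IA.l A) ≫ (Afin L).map (IA.tri A) := by
  refine Afin.hom_ext L fun u => ?_
  rw [Category.assoc, Category.assoc, toAfinApp_center_proj, ← Afin_map_pathCC_tril,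
    ← Functor.map_comp, ← Category.assoc, ← Functor.map_comp]
  exact hM.map_pathLR_comp_eqToHom (Afin_accepts L) u

theorem toAfinApp_letter (a : A) :
    M.map (IA.letter a) ≫ toAfinApp hM (IA.c A) =
      toAfinApp hM (IA.c A) ≫ (Afin L).map (IA.letter a) := by
  refine Afin.hom_ext L fun u => ?_
  rw [Category.assoc, Category.assoc, toAfinApp_center_proj, Afin_map_letter_proj,
    toAfinApp_center_proj, ← Category.assoc, ← Functor.map_comp]
  rfl

theorem toAfinApp_tril :
    M.map (IA.tril A) ≫ toAfinApp hM (IA.r A) =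
      toAfinApp hM (IA.c A) ≫ (Afin L).map (IA.tril A) := by
  rw [Afin_map_tril, toAfinApp_center_proj]
  rfl

theorem toAfinApp_naturality {X Y : WObj A} (e : X ⟶ Y) :
    M.map e.toPath ≫ toAfinApp hM Y = toAfinApp hM X ≫ (Afin L).map e.toPath := by
  change WEdge X Y at e
  cases e with
  | tri => exact toAfinApp_tri hM
  | letter a => exact toAfinApp_letter hM a
  | tril => exact toAfinApp_tril hM

noncomputable def toAfin : M ⟶ Afin L :=
  Paths.liftNatTrans (toAfinApp hM) (toAfinApp_naturality hM)

theorem whiskerLeft_toAfin :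
    Functor.whiskerLeft (OA.inc A) (toAfin hM) = eqToHom (hM.trans (Afin_accepts L).symm) := by
  refine NatTrans.ext (funext fun X => ?_)
  rw [eqToHom_app]
  obtain ⟨_ | _ | _, hX⟩ := X
  · rfl
  · exact absurd rfl hX
  · rfl

theorem eq_toAfin (β : M ⟶ Afin L)
    (hβ : Functor.whiskerLeft (OA.inc A) β = eqToHom (hM.trans (Afin_accepts L).symm)) :
    β = toAfin hM := by
  refine NatTrans.ext (funext fun X => ?_)
  change β.app X = toAfinApp hM X
  match X with
  | WObj.left => exact app_eq_eqToHom_of_whiskerLeft hβ (OA.l A)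
  | WObj.right => exact app_eq_eqToHom_of_whiskerLeft hβ (OA.r A)
  | WObj.center =>
      refine Afin.hom_ext L fun u => ?_
      calc β.app (IA.c A) ≫ Afin.proj L u
          = β.app (IA.c A) ≫ (Afin L).map (pathCC u ≫ IA.tril A) := by
            rw [Afin_map_pathCC_tril]
        _ = M.map (pathCC u ≫ IA.tril A) ≫ β.app (IA.r A) := (β.naturality _).symm
        _ = M.map (pathCC u ≫ IA.tril A) ≫ toAfinApp hM (IA.r A) :=
            congrArg (M.map _ ≫ ·) (app_eq_eqToHom_of_whiskerLeft hβ (OA.r A))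
        _ = toAfinApp hM (IA.c A) ≫ Afin.proj L u := (toAfinApp_center_proj hM u).symm

end Final

end Accepts

/-- `𝒜_fin` accepts `L` and is a final object of `Auto(L)`. -/
theorem Afin_accepts_and_final [HasLimitsOfShape (Discrete (List A)) C]
    (L : OA A ⥤ C) :
    ∃ h : Accepts (Afin L) L, Nonempty (IsTerminal (Auto.mk (Afin L) h)) :=
  ⟨Afin_accepts L, ⟨IsTerminal.ofUniqueHom (fun M => ⟨M.2.toAfin, M.2.whiskerLeft_toAfin⟩)
    (fun M β => Subtype.ext (M.2.eq_toAfin β.1 β.2))⟩⟩
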